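/- arXiv:1808.05925 — 3 statements merged into one kernel-verified Lean document; each statement's English description precedes it below -/
import Mathlib

section
/- Let ν be a finite Borel measure on ℝ, {e_j}_{j≥1} an orthonormal basis of L²(ℝ,ν), w : ℝ → (0,∞) a weight function, and, for each n, let {X_i^n}_{i≥0} be a real-valued adapted sequence and {m_i^n}_{i≥1} a real-valued martingale difference sequence such that: E^n[|Σ_{i=1}^n 1_{(-∞,x]}(X_{i-1}^n) E^n[(m_i^n)²|F_{i-1}^n] − Ψ(x)|] → 0 for every x ∈ ℝ, where Ψ is continuous nondecreasing with Ψ(−∞) = 0 and Ψ(∞) < ∞; there is a nondecreasing Φ with I_n(x) := Σ_{i=1}^n E^n[1_{(-∞,x]}(X_{i-1}^n)(m_i^n)²] ≤ Φ(x) for all x ∈ ℝ and all sufficiently large n; and ∫_ℝ (Ψ(x)+Φ(x)) w(x)² ν(dx) < ∞. Then, with Z_n^w(x) = w(x) Σ_{i=1}^n 1_{(-∞,x]}(X_{i-1}^n) m_i^n, it holds that lim_{J→∞} limsup_{n→∞} E^n[ Σ_{j=J}^∞ ⟨Z_n^w, e_j⟩² ] = 0. -/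
/-!
Write `S_n(x) = ∑_{i<n} 1{X_i ≤ x} m_{i+1}`, so that `Z_n = w S_n`. Martingale differences are
orthogonal, hence `E[S_n(x) S_n(y)] = I_n(x ∧ y)`, and integrating the conditional variances gives
`|I_n(x) - Ψ(x)| → 0`. By Parseval and Fubini,
`E ∑_{j≥J} ⟨Z_n, e_j⟩² = ∫ w² I_n dν - ∑_{j<J} ∫∫ w(x) w(y) I_n(x ∧ y) e_j(x) e_j(y)`,
and dominated convergence (with `I_n ≤ Φ`, `I_n(x ∧ y) ≤ √Φ(x) √Φ(y)`) sends this to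
`∫ w² Ψ dν - ∑_{j<J} A_j` with `A_j = ∫∫ w(x) w(y) Ψ(x ∧ y) e_j(x) e_j(y)`. Finally `Ψ` is the
distribution function of a finite measure `μ`, so `Ψ(x ∧ y) = ∫ 1{t ≤ x} 1{t ≤ y} dμ(t)` and,
by Parseval for each `1_{[t,∞)} w`, `∑_j A_j = ∫ ‖1_{[t,∞)} w‖² dμ(t) = ∫ w² Ψ dν`.
-/

open MeasureTheory ProbabilityTheory Filter
open scoped ENNReal NNReal RealInnerProductSpace Topology BoundedContinuousFunction

noncomputable section

section MartingaleDifference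

variable {Ω : Type*} {mΩ : MeasurableSpace Ω} {P : Measure Ω}

theorem integral_mul_eq_zero_of_condExp_eq_zero {m : MeasurableSpace Ω} (hm : m ≤ mΩ)
    [SigmaFinite (P.trim hm)] {f g : Ω → ℝ} (hf : StronglyMeasurable[m] f)
    (hfg : Integrable (f * g) P) (hg : Integrable g P) (hg0 : P[g | m] =ᵐ[P] 0) :
    ∫ ω, f ω * g ω ∂P = 0 := by
  have hfg0 : P[f * g | m] =ᵐ[P] 0 := by
    filter_upwards [condExp_mul_of_stronglyMeasurable_left hf hfg hg, hg0] with ω h h0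
    simp [h, h0]
  calc ∫ ω, f ω * g ω ∂P = ∫ ω, (P[f * g | m]) ω ∂P := (integral_condExp hm).symm
    _ = 0 := by simp [integral_congr_ae hfg0]

variable {𝒢 : Filtration ℕ mΩ} {X m : ℕ → Ω → ℝ}

structure IsL2MartingaleDiff (𝒢 : Filtration ℕ mΩ) (m : ℕ → Ω → ℝ) (P : Measure Ω) : Prop where
  stronglyMeasurable : ∀ i, StronglyMeasurable[𝒢 (i + 1)] (m (i + 1))
  memLp : ∀ i, MemLp (m (i + 1)) 2 P
  condExp_eq_zero : ∀ i, P[m (i + 1) | 𝒢 i] =ᵐ[P] 0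

theorem IsL2MartingaleDiff.measurable (hm : IsL2MartingaleDiff 𝒢 m P) (i : ℕ) :
    Measurable (m (i + 1)) :=
  ((hm.stronglyMeasurable i).mono (𝒢.le (i + 1))).measurable

def markedSum (X m : ℕ → Ω → ℝ) (n : ℕ) (x : ℝ) (ω : Ω) : ℝ :=
  ∑ i ∈ Finset.range n, (if X i ω ≤ x then (1 : ℝ) else 0) * m (i + 1) ω

/-- The `I_n` of the statement. -/
def markedVariance (P : Measure Ω) (X m : ℕ → Ω → ℝ) (n : ℕ) (x : ℝ) : ℝ :=
  ∑ i ∈ Finset.range n, ∫ ω, (if X i ω ≤ x then (1 : ℝ) else 0) * m (i + 1) ω ^ 2 ∂P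

theorem stronglyMeasurable_indicator_le (hX : Adapted 𝒢 X) (i : ℕ) (x : ℝ) :
    StronglyMeasurable[𝒢 i] (fun ω => if X i ω ≤ x then (1 : ℝ) else 0) := by
  have h := (stronglyMeasurable_const (b := (1 : ℝ))).indicator
    ((hX i) (measurableSet_Iic (a := x)))
  convert h using 1
  ext ω
  by_cases hω : X i ω ≤ x <;> simp [hω]

theorem memLp_indicator_le_mul (hX : Adapted 𝒢 X) {f : Ω → ℝ} (hf : MemLp f 2 P) (i : ℕ)
    (x : ℝ) : MemLp (fun ω => (if X i ω ≤ x then (1 : ℝ) else 0) * f ω) 2 P := by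
  refine hf.of_le (((stronglyMeasurable_indicator_le hX i x).mono (𝒢.le i)).aestronglyMeasurable.mul
    hf.1) (ae_of_all _ fun ω => ?_)
  split_ifs <;> simp

theorem integrable_indicator_le_mul (hX : Adapted 𝒢 X) {f : Ω → ℝ} (hf : Integrable f P)
    (i : ℕ) (x : ℝ) : Integrable (fun ω => (if X i ω ≤ x then (1 : ℝ) else 0) * f ω) P :=
  hf.bdd_mul ((stronglyMeasurable_indicator_le hX i x).mono (𝒢.le i)).aestronglyMeasurable
    (c := 1) (ae_of_all _ fun ω => by split_ifs <;> simp)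

theorem integral_indicator_le_mul_mul_eq_zero_of_lt [IsFiniteMeasure P] (hX : Adapted 𝒢 X)
    (hm : IsL2MartingaleDiff 𝒢 m P) {i k : ℕ} (hik : i < k) (x y : ℝ) :
    ∫ ω, (if X i ω ≤ x then (1 : ℝ) else 0) * m (i + 1) ω *
      ((if X k ω ≤ y then (1 : ℝ) else 0) * m (k + 1) ω) ∂P = 0 := by
  have hf : StronglyMeasurable[𝒢 k] fun ω =>
      (if X i ω ≤ x then (1 : ℝ) else 0) * m (i + 1) ω * (if X k ω ≤ y then (1 : ℝ) else 0) :=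
    (((stronglyMeasurable_indicator_le hX i x).mono (𝒢.mono hik.le)).mul
      ((hm.stronglyMeasurable i).mono (𝒢.mono hik))).mul (stronglyMeasurable_indicator_le hX k y)
  have hfg := (memLp_indicator_le_mul hX (hm.memLp i) i x).integrable_mul
    (memLp_indicator_le_mul hX (hm.memLp k) k y)
  simp_rw [← mul_assoc]
  exact integral_mul_eq_zero_of_condExp_eq_zero (𝒢.le k) hf
    (hfg.congr (ae_of_all _ fun ω => by simp only [Pi.mul_apply]; ring))
    ((hm.memLp k).integrable one_le_two) (hm.condExp_eq_zero k)

/-- Martingale differences are orthogonal, so only the diagonal terms survive. -/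
theorem integral_markedSum_mul_markedSum [IsFiniteMeasure P] (hX : Adapted 𝒢 X)
    (hm : IsL2MartingaleDiff 𝒢 m P) (n : ℕ) (x y : ℝ) :
    ∫ ω, markedSum X m n x ω * markedSum X m n y ω ∂P = markedVariance P X m n (min x y) := by
  have hint : ∀ i k, Integrable (fun ω => (if X i ω ≤ x then (1 : ℝ) else 0) * m (i + 1) ω *
      ((if X k ω ≤ y then (1 : ℝ) else 0) * m (k + 1) ω)) P := fun i k =>
    (memLp_indicator_le_mul hX (hm.memLp i) i x).integrable_mul
      (memLp_indicator_le_mul hX (hm.memLp k) k y)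
  have hoff : ∀ i k, k ≠ i → ∫ ω, (if X i ω ≤ x then (1 : ℝ) else 0) * m (i + 1) ω *
      ((if X k ω ≤ y then (1 : ℝ) else 0) * m (k + 1) ω) ∂P = 0 := by
    intro i k hki
    rcases lt_or_gt_of_ne hki with h | h
    · simp_rw [mul_comm ((if X i _ ≤ x then (1 : ℝ) else 0) * _)]
      exact integral_indicator_le_mul_mul_eq_zero_of_lt hX hm h y x
    · exact integral_indicator_le_mul_mul_eq_zero_of_lt hX hm h x y
  have hdiag : ∀ i ω, (if X i ω ≤ x then (1 : ℝ) else 0) * m (i + 1) ω *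
      ((if X i ω ≤ y then (1 : ℝ) else 0) * m (i + 1) ω) =
      (if X i ω ≤ min x y then (1 : ℝ) else 0) * m (i + 1) ω ^ 2 := by
    intro i ω
    by_cases hx : X i ω ≤ x <;> by_cases hy : X i ω ≤ y <;> simp [hx, hy, sq]
  simp only [markedSum, markedVariance, Finset.sum_mul_sum]
  rw [integral_finsetSum _ fun i _ => integrable_finsetSum _ fun k _ => hint i k]
  refine Finset.sum_congr rfl fun i hi => ?_
  rw [integral_finsetSum _ fun k _ => hint i k,
    Finset.sum_eq_single_of_mem i hi fun k _ hki => hoff i k hki]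
  simp_rw [hdiag]

theorem integral_indicator_le_mul_condExp [IsFiniteMeasure P] (hX : Adapted 𝒢 X) {f : Ω → ℝ}
    (hf : Integrable f P) (i : ℕ) (x : ℝ) :
    ∫ ω, (if X i ω ≤ x then (1 : ℝ) else 0) * (P[f | 𝒢 i]) ω ∂P =
      ∫ ω, (if X i ω ≤ x then (1 : ℝ) else 0) * f ω ∂P := by
  have hc := condExp_mul_of_stronglyMeasurable_left (stronglyMeasurable_indicator_le hX i x)
    (integrable_indicator_le_mul hX hf i x) hf
  calc _ = ∫ ω, ((fun ω => if X i ω ≤ x then (1 : ℝ) else 0) * P[f | 𝒢 i]) ω ∂P := rfl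
    _ = ∫ ω, (P[(fun ω => if X i ω ≤ x then (1 : ℝ) else 0) * f | 𝒢 i]) ω ∂P :=
      integral_congr_ae hc.symm
    _ = _ := integral_condExp (𝒢.le i)

theorem integral_sum_indicator_le_mul_condExp_sq [IsFiniteMeasure P] (hX : Adapted 𝒢 X)
    (hm : ∀ i, MemLp (m (i + 1)) 2 P) (n : ℕ) (x : ℝ) :
    ∫ ω, ∑ i ∈ Finset.range n, (if X i ω ≤ x then (1 : ℝ) else 0) *
      (P[fun ω' => m (i + 1) ω' ^ 2 | 𝒢 i]) ω ∂P = markedVariance P X m n x := by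
  rw [integral_finsetSum _ fun i _ => integrable_indicator_le_mul hX integrable_condExp i x]
  exact Finset.sum_congr rfl fun i _ =>
    integral_indicator_le_mul_condExp hX (hm i).integrable_sq i x

theorem abs_markedVariance_sub_le [IsProbabilityMeasure P] (hX : Adapted 𝒢 X)
    (hm : ∀ i, MemLp (m (i + 1)) 2 P) (n : ℕ) (x c : ℝ) :
    |markedVariance P X m n x - c| ≤ ∫ ω, |(∑ i ∈ Finset.range n,
      (if X i ω ≤ x then (1 : ℝ) else 0) * (P[fun ω' => m (i + 1) ω' ^ 2 | 𝒢 i]) ω) - c| ∂P := by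
  have hV := integrable_finsetSum (Finset.range n) fun i _ =>
    integrable_indicator_le_mul hX (integrable_condExp (f := fun ω' => m (i + 1) ω' ^ 2)
      (m := 𝒢 i) (μ := P)) i x
  rw [← integral_sum_indicator_le_mul_condExp_sq hX hm]
  calc _ = |∫ ω, ((∑ i ∈ Finset.range n, (if X i ω ≤ x then (1 : ℝ) else 0) *
        (P[fun ω' => m (i + 1) ω' ^ 2 | 𝒢 i]) ω) - c) ∂P| := by
        rw [integral_sub hV (integrable_const c), integral_const, probReal_univ, one_smul]
    _ ≤ _ := abs_integral_le_integral_abs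

theorem markedVariance_nonneg (P : Measure Ω) (X m : ℕ → Ω → ℝ) (n : ℕ) (x : ℝ) :
    0 ≤ markedVariance P X m n x :=
  Finset.sum_nonneg fun i _ => integral_nonneg fun ω => by positivity

theorem monotone_markedVariance (hX : Adapted 𝒢 X) (hm : ∀ i, MemLp (m (i + 1)) 2 P) (n : ℕ) :
    Monotone (markedVariance P X m n) := fun x y hxy =>
  Finset.sum_le_sum fun i _ =>
    integral_mono (integrable_indicator_le_mul hX (hm i).integrable_sq i x)
      (integrable_indicator_le_mul hX (hm i).integrable_sq i y) fun ω => by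
        by_cases hx : X i ω ≤ x
        · simp [hx, hx.trans hxy]
        · simp only [hx, if_false, zero_mul]; positivity

end MartingaleDifference

section L2Representation

variable {α : Type*} [MeasurableSpace α] {ν : Measure α}

theorem L2.inner_eq_integral_of_ae_eq {F G : Lp ℝ 2 ν} {f g : α → ℝ} (hF : F =ᵐ[ν] f)
    (hG : G =ᵐ[ν] g) : ⟪F, G⟫ = ∫ x, f x * g x ∂ν := by
  rw [L2.inner_def]
  refine integral_congr_ae ?_
  filter_upwards [hF, hG] with x hx hy
  simp [hx, hy, mul_comm]

theorem sq_integral_abs_mul_le {u g : α → ℝ} (hu : MemLp u 2 ν) (hg : MemLp g 2 ν) :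
    (∫ x, |u x * g x| ∂ν) ^ 2 ≤ (∫ x, u x ^ 2 ∂ν) * ∫ x, g x ^ 2 ∂ν := by
  have hU := hu.abs.coeFn_toLp
  have hG := hg.abs.coeFn_toLp
  have h := real_inner_mul_inner_self_le (hu.abs.toLp _) (hg.abs.toLp _)
  rw [L2.inner_eq_integral_of_ae_eq hU hG, L2.inner_eq_integral_of_ae_eq hU hU,
    L2.inner_eq_integral_of_ae_eq hG hG] at h
  simpa only [Pi.abs_apply, abs_mul, ← sq, sq_abs] using h

variable [SFinite ν] {Ω : Type*} [MeasurableSpace Ω] {P : Measure Ω}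

theorem stronglyMeasurable_inner_of_ae_eq {Z Z' : Ω → Lp ℝ 2 ν} {F G : Ω → α → ℝ}
    (hF : Measurable (Function.uncurry F)) (hG : Measurable (Function.uncurry G))
    (hZ : ∀ ω, Z ω =ᵐ[ν] F ω) (hZ' : ∀ ω, Z' ω =ᵐ[ν] G ω) :
    StronglyMeasurable fun ω => ⟪Z ω, Z' ω⟫ := by
  simp_rw [fun ω => L2.inner_eq_integral_of_ae_eq (hZ ω) (hZ' ω)]
  exact (hF.mul hG).stronglyMeasurable.integral_prod_right'

theorem integrable_inner_self_and_integral_eq [SFinite P] {Z : Ω → Lp ℝ 2 ν}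
    {F : Ω → α → ℝ} (hZ : ∀ ω, Z ω =ᵐ[ν] F ω)
    (hF : Integrable (fun p : Ω × α => F p.1 p.2 ^ 2) (P.prod ν)) :
    Integrable (fun ω => ⟪Z ω, Z ω⟫) P ∧
      ∫ ω, ⟪Z ω, Z ω⟫ ∂P = ∫ x, ∫ ω, F ω x ^ 2 ∂P ∂ν := by
  simp_rw [fun ω => L2.inner_eq_integral_of_ae_eq (hZ ω) (hZ ω), ← sq]
  exact ⟨hF.integral_prod_left, integral_integral_swap hF⟩

/-- Fubini over `Ω × α × α`, dominated through `(∫ |F ω g|)² ≤ ‖F ω‖² ‖g‖²`. -/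
theorem integral_sq_integral_mul_eq_integral_prod [SFinite P] {F : Ω → α → ℝ}
    (hF : Measurable (Function.uncurry F))
    (hF2 : Integrable (fun p : Ω × α => F p.1 p.2 ^ 2) (P.prod ν)) {g : α → ℝ}
    (hg : Measurable g) (hg2 : MemLp g 2 ν) :
    ∫ ω, (∫ x, F ω x * g x ∂ν) ^ 2 ∂P =
      ∫ p : α × α, (∫ ω, F ω p.1 * F ω p.2 ∂P) * (g p.1 * g p.2) ∂(ν.prod ν) := by
  have hFL2 : ∀ᵐ ω ∂P, MemLp (F ω) 2 ν := by
    filter_upwards [((integrable_prod_iff (hF.pow_const 2).aestronglyMeasurable).1 hF2).1]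
      with ω hω
    exact (memLp_two_iff_integrable_sq (hF.comp measurable_prodMk_left).aestronglyMeasurable).2 hω
  set H : Ω → α → ℝ := fun ω x => F ω x * g x
  have hH : Measurable (Function.uncurry H) := hF.mul (hg.comp measurable_snd)
  have hHH : Measurable fun r : Ω × (α × α) => H r.1 r.2.1 * H r.1 r.2.2 :=
    (hH.comp (measurable_fst.prodMk (measurable_fst.comp measurable_snd))).mul
      (hH.comp (measurable_fst.prodMk (measurable_snd.comp measurable_snd)))
  have hint : Integrable (fun r : Ω × (α × α) => H r.1 r.2.1 * H r.1 r.2.2)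
      (P.prod (ν.prod ν)) := by
    refine (integrable_prod_iff hHH.aestronglyMeasurable).2 ⟨?_, ?_⟩
    · filter_upwards [hFL2] with ω hω
      exact (hω.integrable_mul hg2).mul_prod (hω.integrable_mul hg2)
    refine (hF2.integral_prod_left.mul_const (∫ x, g x ^ 2 ∂ν)).mono'
      (hHH.norm.stronglyMeasurable.integral_prod_right').aestronglyMeasurable ?_
    filter_upwards [hFL2] with ω hω
    have hsplit : ∫ p : α × α, ‖H ω p.1 * H ω p.2‖ ∂(ν.prod ν) = (∫ x, |H ω x| ∂ν) ^ 2 := by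
      simp_rw [norm_mul, Real.norm_eq_abs, sq]
      exact integral_prod_mul (fun x => |H ω x|) (fun x => |H ω x|)
    rw [Real.norm_of_nonneg (integral_nonneg fun _ => norm_nonneg _), hsplit]
    exact sq_integral_abs_mul_le hω hg2
  calc ∫ ω, (∫ x, F ω x * g x ∂ν) ^ 2 ∂P
      = ∫ ω, ∫ p : α × α, H ω p.1 * H ω p.2 ∂(ν.prod ν) ∂P := by
        simp_rw [sq]
        exact integral_congr_ae (ae_of_all _ fun ω =>
          (integral_prod_mul (fun x => H ω x) (fun x => H ω x)).symm)
    _ = ∫ p : α × α, ∫ ω, H ω p.1 * H ω p.2 ∂P ∂(ν.prod ν) :=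
        integral_integral_swap (f := fun ω (p : α × α) => H ω p.1 * H ω p.2) hint
    _ = _ := by
        refine integral_congr_ae (ae_of_all _ fun p => ?_)
        simp only [H]
        rw [← integral_mul_const]
        exact integral_congr_ae (ae_of_all _ fun ω => by ring)

end L2Representation

section HilbertTail

variable {E : Type*} [NormedAddCommGroup E] [InnerProductSpace ℝ E]

theorem HilbertBasis.tsum_inner_sq_nat_add (b : HilbertBasis ℕ ℝ E) (x : E) (J : ℕ) :
    ∑' j, ⟪x, b (J + j)⟫ ^ 2 = ⟪x, x⟫ - ∑ j ∈ Finset.range J, ⟪x, b j⟫ ^ 2 := by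
  have h : HasSum (fun j => ⟪x, b j⟫ ^ 2) ⟪x, x⟫ := by
    simpa only [real_inner_comm x, ← sq] using b.hasSum_inner_mul_inner x x
  rw [← h.tsum_eq, ← h.summable.sum_add_tsum_nat_add J]
  simp only [add_comm J, add_sub_cancel_left]

theorem HilbertBasis.integral_tsum_inner_sq_nat_add {Ω : Type*} [MeasurableSpace Ω]
    {P : Measure Ω} (b : HilbertBasis ℕ ℝ E) {Z : Ω → E}
    (hZ : Integrable (fun ω => ⟪Z ω, Z ω⟫) P)
    (hmeas : ∀ j, AEStronglyMeasurable (fun ω => ⟪Z ω, b j⟫) P) (J : ℕ) :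
    ∫ ω, ∑' j, ⟪Z ω, b (J + j)⟫ ^ 2 ∂P =
      ∫ ω, ⟪Z ω, Z ω⟫ ∂P - ∑ j ∈ Finset.range J, ∫ ω, ⟪Z ω, b j⟫ ^ 2 ∂P := by
  have hint : ∀ j, Integrable (fun ω => ⟪Z ω, b j⟫ ^ 2) P := fun j =>
    hZ.mono' ((hmeas j).pow 2) (ae_of_all _ fun ω => by
      simpa [sq, b.orthonormal.1 j] using real_inner_mul_inner_self_le (Z ω) (b j))
  simp_rw [b.tsum_inner_sq_nat_add]
  rw [integral_sub hZ (integrable_finsetSum _ fun j _ => hint j),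
    integral_finsetSum _ fun j _ => hint j]

end HilbertTail

section WeightedMarkedProcess

variable {Ω : Type*} {mΩ : MeasurableSpace Ω} {P : Measure Ω} {𝒢 : Filtration ℕ mΩ}
  {X m : ℕ → Ω → ℝ} {ν : Measure ℝ} {w : ℝ → ℝ}

theorem measurable_weighted_markedSum (hX : ∀ i, Measurable (X i))
    (hm : ∀ i, Measurable (m (i + 1))) (hw : Measurable w) (n : ℕ) :
    Measurable (Function.uncurry fun ω x => w x * markedSum X m n x ω) :=
  (hw.comp measurable_snd).mul <| Finset.measurable_sum _ fun i _ =>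
    (Measurable.ite (measurableSet_le ((hX i).comp measurable_fst) measurable_snd)
      measurable_const measurable_const).mul ((hm i).comp measurable_fst)

theorem memLp_markedSum (hX : Adapted 𝒢 X) (hm : ∀ i, MemLp (m (i + 1)) 2 P) (n : ℕ) (x : ℝ) :
    MemLp (markedSum X m n x) 2 P := by
  have h := memLp_finsetSum' (Finset.range n) fun i _ => memLp_indicator_le_mul hX (hm i) i x
  convert h using 1
  ext ω
  simp [markedSum]

theorem integral_sq_weighted_markedSum [IsFiniteMeasure P] (hX : Adapted 𝒢 X)
    (hm : IsL2MartingaleDiff 𝒢 m P) (n : ℕ) (x : ℝ) :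
    ∫ ω, (w x * markedSum X m n x ω) ^ 2 ∂P = w x ^ 2 * markedVariance P X m n x := by
  simp_rw [mul_pow, sq (markedSum X m n x _)]
  rw [integral_const_mul, integral_markedSum_mul_markedSum hX hm, min_self]

theorem integrable_sq_weighted_markedSum [IsFiniteMeasure P] [SFinite ν] (hX : Adapted 𝒢 X)
    (hm : IsL2MartingaleDiff 𝒢 m P) (hw : Measurable w) {n : ℕ}
    (hI : Integrable (fun x => w x ^ 2 * markedVariance P X m n x) ν) :
    Integrable (fun p : Ω × ℝ => (w p.2 * markedSum X m n p.2 p.1) ^ 2) (P.prod ν) := by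
  have hmeas : Measurable (Function.uncurry fun ω x => w x * markedSum X m n x ω) :=
    measurable_weighted_markedSum (fun _ => hX.measurable) hm.measurable hw n
  refine (integrable_prod_iff' (hmeas.pow_const 2).aestronglyMeasurable).2
    ⟨ae_of_all _ fun x => ((memLp_markedSum hX hm.memLp n x).const_mul (w x)).integrable_sq, ?_⟩
  refine hI.congr (ae_of_all _ fun x => ?_)
  simp_rw [norm_pow, Real.norm_eq_abs, sq_abs]
  exact (integral_sq_weighted_markedSum hX hm n x).symm

theorem integral_inner_self_weighted [IsFiniteMeasure P] [SFinite ν] (hX : Adapted 𝒢 X)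
    (hm : IsL2MartingaleDiff 𝒢 m P) (hw : Measurable w) {n : ℕ} {Z : Ω → Lp ℝ 2 ν}
    (hZ : ∀ ω, Z ω =ᵐ[ν] fun x => w x * markedSum X m n x ω)
    (hI : Integrable (fun x => w x ^ 2 * markedVariance P X m n x) ν) :
    Integrable (fun ω => ⟪Z ω, Z ω⟫) P ∧
      ∫ ω, ⟪Z ω, Z ω⟫ ∂P = ∫ x, w x ^ 2 * markedVariance P X m n x ∂ν := by
  refine (integrable_inner_self_and_integral_eq hZ
    (integrable_sq_weighted_markedSum hX hm hw hI)).imp_right fun h => h.trans ?_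
  exact integral_congr_ae (ae_of_all _ fun x => integral_sq_weighted_markedSum hX hm n x)

theorem integral_inner_sq_weighted [IsFiniteMeasure P] [SFinite ν] (hX : Adapted 𝒢 X)
    (hm : IsL2MartingaleDiff 𝒢 m P) (hw : Measurable w) {n : ℕ} {Z : Ω → Lp ℝ 2 ν}
    (hZ : ∀ ω, Z ω =ᵐ[ν] fun x => w x * markedSum X m n x ω)
    (hI : Integrable (fun x => w x ^ 2 * markedVariance P X m n x) ν) {f : Lp ℝ 2 ν}
    {g : ℝ → ℝ} (hg : Measurable g) (hfg : f =ᵐ[ν] g) :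
    ∫ ω, ⟪Z ω, f⟫ ^ 2 ∂P = ∫ p : ℝ × ℝ,
      w p.1 * w p.2 * markedVariance P X m n (min p.1 p.2) * (g p.1 * g p.2) ∂(ν.prod ν) := by
  simp_rw [fun ω => L2.inner_eq_integral_of_ae_eq (hZ ω) hfg]
  rw [integral_sq_integral_mul_eq_integral_prod (measurable_weighted_markedSum
    (fun _ => hX.measurable) hm.measurable hw n) (integrable_sq_weighted_markedSum hX hm hw hI)
    hg ((Lp.memLp f).ae_eq hfg)]
  refine integral_congr_ae (ae_of_all _ fun p => ?_)
  simp_rw [mul_mul_mul_comm (w p.1)]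
  rw [integral_const_mul, integral_markedSum_mul_markedSum hX hm]

theorem integral_tsum_inner_sq_weighted [IsFiniteMeasure P] [SFinite ν] (hX : Adapted 𝒢 X)
    (hm : IsL2MartingaleDiff 𝒢 m P) (hw : Measurable w) {n : ℕ} {Z : Ω → Lp ℝ 2 ν}
    (hZ : ∀ ω, Z ω =ᵐ[ν] fun x => w x * markedSum X m n x ω)
    (hI : Integrable (fun x => w x ^ 2 * markedVariance P X m n x) ν)
    (b : HilbertBasis ℕ ℝ (Lp ℝ 2 ν)) {g : ℕ → ℝ → ℝ} (hg : ∀ j, Measurable (g j))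
    (hbg : ∀ j, b j =ᵐ[ν] g j) (J : ℕ) :
    ∫ ω, ∑' j, ⟪Z ω, b (J + j)⟫ ^ 2 ∂P =
      ∫ x, w x ^ 2 * markedVariance P X m n x ∂ν - ∑ j ∈ Finset.range J, ∫ p : ℝ × ℝ,
        w p.1 * w p.2 * markedVariance P X m n (min p.1 p.2) * (g j p.1 * g j p.2)
          ∂(ν.prod ν) := by
  obtain ⟨hZZ, hZZ_eq⟩ := integral_inner_self_weighted hX hm hw hZ hI
  have hmeas : ∀ j, AEStronglyMeasurable (fun ω => ⟪Z ω, b j⟫) P := fun j =>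
    (stronglyMeasurable_inner_of_ae_eq (G := fun _ => g j) (measurable_weighted_markedSum
      (fun _ => hX.measurable) hm.measurable hw n) ((hg j).comp measurable_snd) hZ
      fun _ => hbg j).aestronglyMeasurable
  rw [b.integral_tsum_inner_sq_nat_add hZZ hmeas, hZZ_eq]
  simp_rw [integral_inner_sq_weighted hX hm hw hZ hI (hg _) (hbg _)]

end WeightedMarkedProcess

section KernelTrace

variable {α : Type*} [MeasurableSpace α] {ν : Measure α}

theorem hasSum_sq_integral_mul_of_hilbertBasis (b : HilbertBasis ℕ ℝ (Lp ℝ 2 ν))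
    {g : ℕ → α → ℝ} (hbg : ∀ j, b j =ᵐ[ν] g j) {v : α → ℝ} (hv : MemLp v 2 ν) :
    HasSum (fun j => (∫ x, v x * g j x ∂ν) ^ 2) (∫ x, v x ^ 2 ∂ν) := by
  have hV := hv.coeFn_toLp
  have h := b.hasSum_inner_mul_inner (hv.toLp v) (hv.toLp v)
  have hj : ∀ j, ⟪hv.toLp v, b j⟫ * ⟪b j, hv.toLp v⟫ = (∫ x, v x * g j x ∂ν) ^ 2 := fun j => by
    rw [real_inner_comm (hv.toLp v), L2.inner_eq_integral_of_ae_eq hV (hbg j), sq]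
  simp_rw [hj, L2.inner_eq_integral_of_ae_eq hV hV, ← sq] at h
  exact h

variable [SFinite ν] {T : Type*} [MeasurableSpace T] {μ : Measure T} [SFinite μ]

/-- Parseval for each `u_t`, then Fubini. -/
theorem hasSum_integral_kernel_mul (b : HilbertBasis ℕ ℝ (Lp ℝ 2 ν)) {g : ℕ → α → ℝ}
    (hg : ∀ j, Measurable (g j)) (hbg : ∀ j, b j =ᵐ[ν] g j) {u : T → α → ℝ}
    (hu : Measurable (Function.uncurry u))
    (hu2 : Integrable (fun p : T × α => u p.1 p.2 ^ 2) (μ.prod ν)) :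
    HasSum (fun j => ∫ p : α × α, (∫ t, u t p.1 * u t p.2 ∂μ) * (g j p.1 * g j p.2) ∂(ν.prod ν))
      (∫ p : T × α, u p.1 p.2 ^ 2 ∂(μ.prod ν)) := by
  have hgL2 : ∀ j, MemLp (g j) 2 ν := fun j => (Lp.memLp (b j)).ae_eq (hbg j)
  simp_rw [← integral_sq_integral_mul_eq_integral_prod hu hu2 (hg _) (hgL2 _)]
  have hParseval : ∀ᵐ t ∂μ, HasSum (fun j => (∫ x, u t x * g j x ∂ν) ^ 2) (∫ x, u t x ^ 2 ∂ν) := by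
    filter_upwards [((integrable_prod_iff (hu.pow_const 2).aestronglyMeasurable).1 hu2).1]
      with t ht
    exact hasSum_sq_integral_mul_of_hilbertBasis b hbg
      ((memLp_two_iff_integrable_sq (hu.comp measurable_prodMk_left).aestronglyMeasurable).2 ht)
  have hmeas : ∀ j, AEStronglyMeasurable (fun t => (∫ x, u t x * g j x ∂ν) ^ 2) μ := fun j =>
    ((hu.mul ((hg j).comp measurable_snd)).stronglyMeasurable.integral_prod_right'.pow
      2).aestronglyMeasurable
  rw [integral_prod _ hu2]
  refine hasSum_integral_of_dominated_convergence _ hmeas (fun j => ae_of_all _ fun t => ?_)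
    (hParseval.mono fun t ht => ht.summable) ?_ hParseval
  · rw [Real.norm_of_nonneg (sq_nonneg _)]
  · refine hu2.integral_prod_left.congr ?_
    filter_upwards [hParseval] with t ht
    exact ht.tsum_eq.symm

end KernelTrace

section MinKernel

variable {μ : Measure ℝ} {Ψ w : ℝ → ℝ}

theorem integral_ite_le_const (hμ : ∀ c, μ.real (Set.Iic c) = Ψ c) (c a : ℝ) :
    ∫ t, (if t ≤ c then a else 0) ∂μ = a * Ψ c := by
  have h : (fun t => if t ≤ c then a else 0) = (Set.Iic c).indicator fun _ => a := by
    ext t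
    by_cases ht : t ≤ c <;> simp [ht]
  rw [h, integral_indicator_const _ measurableSet_Iic, hμ, smul_eq_mul, mul_comm]

/-- `Ψ(x ∧ y) = ∫ 1{t ≤ x} 1{t ≤ y} dμ(t)` exhibits `w(x) w(y) Ψ(x ∧ y)` as a kernel of the form
`∫ u_t(x) u_t(y) dμ(t)` with `u_t = 1_{[t, ∞)} w`. -/
theorem hasSum_integral_min_kernel [IsFiniteMeasure μ] (hμ : ∀ c, μ.real (Set.Iic c) = Ψ c)
    {ν : Measure ℝ} [SFinite ν] (hw : Measurable w)
    (hΨ : Integrable (fun x => w x ^ 2 * Ψ x) ν) (b : HilbertBasis ℕ ℝ (Lp ℝ 2 ν))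
    {g : ℕ → ℝ → ℝ} (hg : ∀ j, Measurable (g j)) (hbg : ∀ j, b j =ᵐ[ν] g j) :
    HasSum (fun j => ∫ p : ℝ × ℝ, w p.1 * w p.2 * Ψ (min p.1 p.2) * (g j p.1 * g j p.2)
      ∂(ν.prod ν)) (∫ x, w x ^ 2 * Ψ x ∂ν) := by
  set u : ℝ → ℝ → ℝ := fun t x => if t ≤ x then w x else 0
  have hu : Measurable (Function.uncurry u) :=
    Measurable.ite (measurableSet_le measurable_fst measurable_snd) (hw.comp measurable_snd)
      measurable_const
  have hu_sq : ∀ x, ∫ t, u t x ^ 2 ∂μ = w x ^ 2 * Ψ x := fun x => by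
    simp_rw [u, ite_pow, zero_pow two_ne_zero]
    exact integral_ite_le_const hμ x _
  have hu_kernel : ∀ x y, ∫ t, u t x * u t y ∂μ = w x * w y * Ψ (min x y) := fun x y => by
    have h : ∀ t, u t x * u t y = if t ≤ min x y then w x * w y else 0 := fun t => by
      by_cases hx : t ≤ x <;> by_cases hy : t ≤ y <;> simp [u, hx, hy]
    simp_rw [h]
    exact integral_ite_le_const hμ _ _
  have hu2 : Integrable (fun p : ℝ × ℝ => u p.1 p.2 ^ 2) (μ.prod ν) := by
    refine (integrable_prod_iff' (hu.pow_const 2).aestronglyMeasurable).2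
      ⟨ae_of_all _ fun x => ?_, hΨ.congr (ae_of_all _ fun x => ?_)⟩
    · exact (integrable_const (w x ^ 2)).mono'
        ((hu.comp (measurable_id.prodMk measurable_const)).pow_const 2).aestronglyMeasurable
        (ae_of_all _ fun t => by by_cases ht : t ≤ x <;> simp [u, ht, sq_nonneg])
    · simp_rw [norm_pow, Real.norm_eq_abs, sq_abs]
      exact (hu_sq x).symm
  have h := hasSum_integral_kernel_mul b hg hbg hu hu2
  simp_rw [hu_kernel, integral_prod_symm _ hu2, hu_sq] at h
  exact h

end MinKernel

theorem exists_isFiniteMeasure_real_Iic {Ψ : ℝ → ℝ}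
    (hΨ_cont : ∀ x, ContinuousWithinAt Ψ (Set.Ici x) x)
    (hΨ_mono : Monotone Ψ) (hΨ_bot : Tendsto Ψ atBot (𝓝 0)) {L : ℝ}
    (hΨ_top : Tendsto Ψ atTop (𝓝 L)) :
    ∃ μ : Measure ℝ, IsFiniteMeasure μ ∧ ∀ c, μ.real (Set.Iic c) = Ψ c := by
  set F : StieltjesFunction ℝ := ⟨Ψ, hΨ_mono, hΨ_cont⟩
  refine ⟨F.measure, F.isFiniteMeasure hΨ_bot hΨ_top, fun c => ?_⟩
  have hΨ0 : 0 ≤ Ψ c := le_of_tendsto hΨ_bot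
    (eventually_atBot.2 ⟨c, fun _ hy => hΨ_mono hy⟩)
  rw [measureReal_def, F.measure_Iic hΨ_bot, sub_zero, ENNReal.toReal_ofReal hΨ0]

section DominatedConvergence

variable {ν : Measure ℝ} {w : ℝ → ℝ}

theorem integrable_sq_mul_of_le {F G : ℝ → ℝ} (hG : Integrable (fun x => G x * w x ^ 2) ν)
    (hw : Measurable w) (hF : Measurable F) (hF0 : ∀ x, 0 ≤ F x) (hFG : ∀ x, F x ≤ G x) :
    Integrable (fun x => w x ^ 2 * F x) ν :=
  hG.mono' ((hw.pow_const 2).mul hF).aestronglyMeasurable (ae_of_all _ fun x => by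
    rw [Real.norm_of_nonneg (mul_nonneg (sq_nonneg _) (hF0 x)), mul_comm]
    exact mul_le_mul_of_nonneg_right (hFG x) (sq_nonneg _))

variable {I : ℕ → ℝ → ℝ} {Ψ Φ : ℝ → ℝ}

theorem tendsto_integral_sq_mul (hw : Measurable w) (hI_meas : ∀ n, Measurable (I n))
    (hI0 : ∀ n x, 0 ≤ I n x) (hIΦ : ∀ᶠ n in atTop, ∀ x, I n x ≤ Φ x)
    (hIΨ : ∀ x, Tendsto (fun n => I n x) atTop (𝓝 (Ψ x)))
    (hΦ : Integrable (fun x => w x ^ 2 * Φ x) ν) :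
    Tendsto (fun n => ∫ x, w x ^ 2 * I n x ∂ν) atTop (𝓝 (∫ x, w x ^ 2 * Ψ x ∂ν)) := by
  refine tendsto_integral_filter_of_dominated_convergence _
    (Eventually.of_forall fun n => ((hw.pow_const 2).mul (hI_meas n)).aestronglyMeasurable)
    ?_ hΦ (ae_of_all _ fun x => (hIΨ x).const_mul _)
  filter_upwards [hIΦ] with n hn
  refine ae_of_all _ fun x => ?_
  rw [Real.norm_of_nonneg (mul_nonneg (sq_nonneg _) (hI0 n x))]
  exact mul_le_mul_of_nonneg_left (hn x) (sq_nonneg _)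

/-- Dominated by `(|w| √Φ |g|) ⊗ (|w| √Φ |g|)`, since `Φ(x ∧ y) ≤ √(Φ x) √(Φ y)` for monotone
`Φ ≥ 0`. -/
theorem tendsto_integral_min_kernel (hw : Measurable w) (hI_meas : ∀ n, Measurable (I n))
    (hI0 : ∀ n x, 0 ≤ I n x) (hIΦ : ∀ᶠ n in atTop, ∀ x, I n x ≤ Φ x)
    (hIΨ : ∀ x, Tendsto (fun n => I n x) atTop (𝓝 (Ψ x))) (hΦ_mono : Monotone Φ)
    (hΦ0 : ∀ x, 0 ≤ Φ x) (hΦ : Integrable (fun x => w x ^ 2 * Φ x) ν) {g : ℝ → ℝ}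
    (hg : Measurable g) (hg2 : MemLp g 2 ν) :
    Tendsto (fun n => ∫ p : ℝ × ℝ, w p.1 * w p.2 * I n (min p.1 p.2) * (g p.1 * g p.2)
      ∂(ν.prod ν)) atTop
      (𝓝 (∫ p : ℝ × ℝ, w p.1 * w p.2 * Ψ (min p.1 p.2) * (g p.1 * g p.2) ∂(ν.prod ν))) := by
  set d : ℝ → ℝ := fun x => |w x| * √(Φ x) * |g x|
  have hd : MemLp (fun x => w x * √(Φ x)) 2 ν :=
    (memLp_two_iff_integrable_sq (hw.mul hΦ_mono.measurable.sqrt).aestronglyMeasurable).2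
      (hΦ.congr (ae_of_all _ fun x => by
        simp only [Pi.mul_apply]; rw [mul_pow, Real.sq_sqrt (hΦ0 x)]))
  have hd_int : Integrable d ν := (hd.integrable_mul hg2).abs.congr
    (ae_of_all _ fun x => by simp [d, abs_mul, abs_of_nonneg (Real.sqrt_nonneg _)])
  have hmin : ∀ x y, Φ (min x y) ≤ √(Φ x) * √(Φ y) := fun x y => by
    rw [← Real.sqrt_mul_self (hΦ0 (min x y)), ← Real.sqrt_mul (hΦ0 x)]
    exact Real.sqrt_le_sqrt (mul_le_mul (hΦ_mono (min_le_left x y)) (hΦ_mono (min_le_right x y))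
      (hΦ0 _) (hΦ0 x))
  refine tendsto_integral_filter_of_dominated_convergence (fun p => d p.1 * d p.2)
    (Eventually.of_forall fun n => Measurable.aestronglyMeasurable ?_) ?_
    (hd_int.mul_prod hd_int) (ae_of_all _ fun p =>
      (((hIΨ (min p.1 p.2)).const_mul (w p.1 * w p.2)).mul_const (g p.1 * g p.2)))
  · exact (((hw.comp measurable_fst).mul (hw.comp measurable_snd)).mul
      ((hI_meas n).comp (measurable_fst.min measurable_snd))).mul
      ((hg.comp measurable_fst).mul (hg.comp measurable_snd))
  filter_upwards [hIΦ] with n hn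
  refine ae_of_all _ fun p => ?_
  have hle := (hn (min p.1 p.2)).trans (hmin p.1 p.2)
  simp only [d, norm_mul, Real.norm_eq_abs, abs_of_nonneg (hI0 n _)]
  calc |w p.1| * |w p.2| * I n (min p.1 p.2) * (|g p.1| * |g p.2|)
      ≤ |w p.1| * |w p.2| * (√(Φ p.1) * √(Φ p.2)) * (|g p.1| * |g p.2|) := by gcongr
    _ = _ := by ring

end DominatedConvergence

theorem tendsto_limsup_of_hasSum {u : ℕ → ℕ → ℝ} {t : ℕ → ℝ} {a : ℕ → ℕ → ℝ} {T : ℝ}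
    {A : ℕ → ℝ} (hu : ∀ J, ∀ᶠ n in atTop, u J n = t n - ∑ j ∈ Finset.range J, a n j)
    (ht : Tendsto t atTop (𝓝 T)) (ha : ∀ j, Tendsto (fun n => a n j) atTop (𝓝 (A j)))
    (hA : HasSum A T) :
    Tendsto (fun J => limsup (u J) atTop) atTop (𝓝 0) := by
  have hlim : ∀ J, limsup (u J) atTop = T - ∑ j ∈ Finset.range J, A j := fun J =>
    ((ht.sub (tendsto_finsetSum _ fun j _ => ha j)).congr'
      ((hu J).mono fun _ h => h.symm)).limsup_eq
  simpa only [hlim, sub_self] using (tendsto_const_nhds (x := T)).sub hA.tendsto_sum_nat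

theorem tightness_weighted_marked_empirical_process_general
    (ν : Measure ℝ) [IsFiniteMeasure ν]
    -- an orthonormal basis of L²(ℝ,ν)
    (e : ℕ → Lp ℝ 2 ν) (he_on : Orthonormal ℝ e)
    (he_total : (Submodule.span ℝ (Set.range e)).topologicalClosure = ⊤)
    -- the weight function
    (w : ℝ → ℝ) (hw_meas : Measurable w)
    -- the filtered probability spaces
    (Ω : ℕ → Type*) [ms : ∀ n, MeasurableSpace (Ω n)]
    (P : ∀ n, Measure (Ω n)) [∀ n, IsProbabilityMeasure (P n)]
    (ℱ : ∀ n, Filtration ℕ (ms n))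
    -- the adapted sequence X and the martingale difference sequence m
    (X : ∀ n, ℕ → Ω n → ℝ) (hX : ∀ n, Adapted (ℱ n) (X n))
    (m : ∀ n, ℕ → Ω n → ℝ)
    (hm_meas : ∀ n i, StronglyMeasurable[(ℱ n) (i + 1)] (m n (i + 1)))
    (hm_L2 : ∀ n i, MemLp (m n (i + 1)) 2 (P n))
    (hm_mds : ∀ n i, (P n)[m n (i + 1) | (ℱ n) i] =ᵐ[P n] 0)
    -- the limiting variance function Ψ
    (Ψ : ℝ → ℝ) (hΨ_cont : Continuous Ψ) (hΨ_mono : Monotone Ψ)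
    (hΨ_bot : Tendsto Ψ atBot (𝓝 0)) (hΨ_top : ∃ L : ℝ, Tendsto Ψ atTop (𝓝 L))
    -- Assumption 1.2 (i): L¹ convergence of the conditional variances
    (h1 : ∀ x : ℝ,
      Tendsto (fun n => ∫ ω,
          |(∑ i ∈ Finset.range n, (if X n i ω ≤ x then (1 : ℝ) else 0) *
              ((P n)[fun ω' => (m n (i + 1) ω') ^ 2 | (ℱ n) i]) ω) - Ψ x| ∂(P n))
        atTop (𝓝 0))
    -- Assumption 1.2 (i): domination `I_n ≤ Φ` for large n and ∫ (Ψ + Φ) w² dν < ∞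
    (hΦ : ∃ Φ : ℝ → ℝ, Monotone Φ ∧
      (∀ᶠ n in atTop, ∀ x : ℝ,
        (∑ i ∈ Finset.range n,
            ∫ ω, (if X n i ω ≤ x then (1 : ℝ) else 0) * (m n (i + 1) ω) ^ 2 ∂(P n)) ≤ Φ x) ∧
      Integrable (fun x => (Ψ x + Φ x) * (w x) ^ 2) ν)
    -- the L²(ℝ,ν)-valued random elements Z_n^w
    (Z : ∀ n, Ω n → Lp ℝ 2 ν)
    (hZ : ∀ n ω, (Z n ω : ℝ → ℝ) =ᵐ[ν] fun x =>
      w x * ∑ i ∈ Finset.range n, (if X n i ω ≤ x then (1 : ℝ) else 0) * m n (i + 1) ω) :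
    -- conclusion: lim_J limsup_n E^n[ Σ_{j≥J} ⟨Z_n^w, e_j⟩² ] = 0
    Tendsto (fun J : ℕ =>
        limsup (fun n => ∫ ω, (∑' j : ℕ, ⟪Z n ω, e (J + j)⟫ ^ 2) ∂(P n)) atTop)
      atTop (𝓝 0) := by
  obtain ⟨Φ, hΦ_mono, hIΦ, hΨΦ⟩ := hΦ
  obtain ⟨μ, _, hμ⟩ := exists_isFiniteMeasure_real_Iic
    (fun _ => hΨ_cont.continuousWithinAt) hΨ_mono hΨ_bot hΨ_top.choose_spec
  set I : ℕ → ℝ → ℝ := fun n => markedVariance (P n) (X n) (m n) n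
  have hI_meas : ∀ n, Measurable (I n) := fun n =>
    (monotone_markedVariance (hX n) (hm_L2 n) n).measurable
  have hI0 : ∀ n x, 0 ≤ I n x := fun n => markedVariance_nonneg _ _ _ n
  have hΨ0 : ∀ x, 0 ≤ Ψ x := fun x => hμ x ▸ measureReal_nonneg
  have hΦ0 : ∀ x, 0 ≤ Φ x := fun x => (hI0 _ x).trans (hIΦ.exists.choose_spec x)
  have hΦw := integrable_sq_mul_of_le hΨΦ hw_meas hΦ_mono.measurable hΦ0
    fun x => le_add_of_nonneg_left (hΨ0 x)
  have hIΨ : ∀ x, Tendsto (fun n => I n x) atTop (𝓝 (Ψ x)) := fun x =>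
    tendsto_iff_norm_sub_tendsto_zero.2 (squeeze_zero (fun _ => norm_nonneg _)
      (fun n => abs_markedVariance_sub_le (hX n) (hm_L2 n) n x (Ψ x)) (h1 x))
  set b := HilbertBasis.mk he_on he_total.ge
  obtain ⟨g, hg, hbg⟩ : ∃ g : ℕ → ℝ → ℝ, (∀ j, Measurable (g j)) ∧ ∀ j, b j =ᵐ[ν] g j :=
    ⟨_, fun j => (Lp.aestronglyMeasurable (b j)).stronglyMeasurable_mk.measurable,
      fun j => (Lp.aestronglyMeasurable (b j)).ae_eq_mk⟩
  refine tendsto_limsup_of_hasSum (fun J => ?_)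
    (tendsto_integral_sq_mul hw_meas hI_meas hI0 hIΦ hIΨ hΦw)
    (fun j => tendsto_integral_min_kernel hw_meas hI_meas hI0 hIΦ hIΨ hΦ_mono hΦ0 hΦw (hg j)
      ((Lp.memLp (b j)).ae_eq (hbg j)))
    (hasSum_integral_min_kernel hμ hw_meas (integrable_sq_mul_of_le hΨΦ hw_meas
      hΨ_cont.measurable hΨ0 fun x => le_add_of_nonneg_right (hΦ0 x)) b hg hbg)
  filter_upwards [hIΦ] with n hn
  rw [← HilbertBasis.coe_mk he_on he_total.ge]
  exact integral_tsum_inner_sq_weighted (hX n) ⟨hm_meas n, hm_L2 n, hm_mds n⟩ hw_meas (hZ n)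
    (integrable_sq_mul_of_le hΨΦ hw_meas (hI_meas n) (hI0 n)
      fun x => (hn x).trans (le_add_of_nonneg_left (hΨ0 x))) b hg hbg J

/-- **Lemma 3.2 (tightness estimate for `Z_n^w`).** Under Assumption 1.2 (i), for any
orthonormal basis `{e_j}` of `L²(ℝ,ν)`,
`lim_{J→∞} limsup_{n→∞} E^n[ Σ_{j≥J} ⟨Z_n^w, e_j⟩² ] = 0`. -/
theorem tightness_weighted_marked_empirical_process
    (ν : Measure ℝ) [IsFiniteMeasure ν]
    -- an orthonormal basis of L²(ℝ,ν)
    (e : ℕ → Lp ℝ 2 ν) (he_on : Orthonormal ℝ e)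
    (he_total : (Submodule.span ℝ (Set.range e)).topologicalClosure = ⊤)
    -- the weight function
    (w : ℝ → ℝ) (hw_meas : Measurable w) (hw_pos : ∀ x, 0 < w x)
    -- the filtered probability spaces
    (Ω : ℕ → Type*) [ms : ∀ n, MeasurableSpace (Ω n)]
    (P : ∀ n, Measure (Ω n)) [∀ n, IsProbabilityMeasure (P n)]
    (ℱ : ∀ n, Filtration ℕ (ms n))
    -- the adapted sequence X and the martingale difference sequence m
    (X : ∀ n, ℕ → Ω n → ℝ) (hX : ∀ n, Adapted (ℱ n) (X n))
    (m : ∀ n, ℕ → Ω n → ℝ)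
    (hm_meas : ∀ n i, StronglyMeasurable[(ℱ n) (i + 1)] (m n (i + 1)))
    (hm_L2 : ∀ n i, MemLp (m n (i + 1)) 2 (P n))
    (hm_mds : ∀ n i, (P n)[m n (i + 1) | (ℱ n) i] =ᵐ[P n] 0)
    -- the limiting variance function Ψ
    (Ψ : ℝ → ℝ) (hΨ_cont : Continuous Ψ) (hΨ_mono : Monotone Ψ)
    (hΨ_bot : Tendsto Ψ atBot (𝓝 0)) (hΨ_top : ∃ L : ℝ, Tendsto Ψ atTop (𝓝 L))
    -- Assumption 1.2 (i): L¹ convergence of the conditional variances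
    (h1 : ∀ x : ℝ,
      Tendsto (fun n => ∫ ω,
          |(∑ i ∈ Finset.range n, (if X n i ω ≤ x then (1 : ℝ) else 0) *
              ((P n)[fun ω' => (m n (i + 1) ω') ^ 2 | (ℱ n) i]) ω) - Ψ x| ∂(P n))
        atTop (𝓝 0))
    -- Assumption 1.2 (i): domination `I_n ≤ Φ` for large n and ∫ (Ψ + Φ) w² dν < ∞
    (hΦ : ∃ Φ : ℝ → ℝ, Monotone Φ ∧
      (∀ᶠ n in atTop, ∀ x : ℝ,
        (∑ i ∈ Finset.range n,
            ∫ ω, (if X n i ω ≤ x then (1 : ℝ) else 0) * (m n (i + 1) ω) ^ 2 ∂(P n)) ≤ Φ x) ∧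
      Integrable (fun x => (Ψ x + Φ x) * (w x) ^ 2) ν)
    -- the L²(ℝ,ν)-valued random elements Z_n^w
    (Z : ∀ n, Ω n → Lp ℝ 2 ν)
    (hZ : ∀ n ω, (Z n ω : ℝ → ℝ) =ᵐ[ν] fun x =>
      w x * ∑ i ∈ Finset.range n, (if X n i ω ≤ x then (1 : ℝ) else 0) * m n (i + 1) ω) :
    -- conclusion: lim_J limsup_n E^n[ Σ_{j≥J} ⟨Z_n^w, e_j⟩² ] = 0
    Tendsto (fun J : ℕ =>
        limsup (fun n => ∫ ω, (∑' j : ℕ, ⟪Z n ω, e (J + j)⟫ ^ 2) ∂(P n)) atTop)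
      atTop (𝓝 0) :=
  tightness_weighted_marked_empirical_process_general ν e he_on he_total w hw_meas Ω (ms := ms) P ℱ
    X hX m hm_meas hm_L2 hm_mds Ψ hΨ_cont hΨ_mono hΨ_bot hΨ_top h1 hΦ Z hZ
end
end

section
/- Let B be a standard Brownian motion and let μ be a Borel probability measure on ℝ, absolutely continuous with respect to Lebesgue measure, with cumulative distribution function Ψ(x) = μ((−∞,x]), and suppose ∫_ℝ Ψ(x)^{−1/2} μ(dx) < ∞. Then the random variable ∫_ℝ (|B(Ψ(x))|²/Ψ(x)) μ(dx) has the same distribution as ∫_0^1 (|B(u)|²/u) du. -/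
open MeasureTheory ProbabilityTheory Filter
open scoped ENNReal NNReal Topology

noncomputable section

/-- A standard Brownian motion on `[0,∞)` (the values for negative times are irrelevant). -/
def IsStandardBrownianMotion {Ω : Type*} [MeasurableSpace Ω]
    (P : Measure Ω) (B : ℝ → Ω → ℝ) : Prop :=
  (∀ t, Measurable (B t)) ∧
  (∀ᵐ ω ∂P, Continuous fun t => B t ω) ∧
  (∀ᵐ ω ∂P, B 0 ω = 0) ∧
  (∀ s t : ℝ, 0 ≤ s → s ≤ t →
      P.map (fun ω => B t ω - B s ω) = gaussianReal 0 (t - s).toNNReal) ∧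
  (∀ n : ℕ, ∀ t : Fin (n + 1) → ℝ, (∀ i, 0 ≤ t i) → Monotone t →
      iIndepFun
        (fun i : Fin n => fun ω => B (t i.succ) ω - B (t i.castSucc) ω) P)

open Set

/-!
Pathwise, the claim is the change of variables `u = Ψ x`. Since `μ` has no atoms, `Ψ` is
continuous, so every sublevel set `{Ψ ≤ t}` with `0 ≤ t < 1` is a closed initial ray `Iic a`
with `Ψ a = t` (intermediate value theorem). Hence `Ψ` pushes `μ` forward to the uniform
measure on `(0, 1]`, and the two random variables agree on every continuous path of `B`.
-/

theorem StieltjesFunction.continuous_of_nullSingletonClass (f : StieltjesFunction ℝ)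
    [NullSingletonClass f.measure] : Continuous f := by
  refine continuous_iff_continuousAt.2 fun x => continuousAt_iff_continuous_left_right.2
    ⟨?_, f.right_continuous x⟩
  have hleft : Function.leftLim f x = f x := by
    have h : f.measure {x} = 0 := MeasureTheory.measure_singleton x
    rw [f.measure_singleton, ENNReal.ofReal_eq_zero, sub_nonpos] at h
    exact le_antisymm (f.mono.leftLim_le le_rfl) h
  exact continuousWithinAt_Iio_iff_Iic.1
    ((f.mono.continuousWithinAt_Iio_iff_leftLim_eq).2 hleft)

theorem ProbabilityTheory.continuous_cdf (μ : Measure ℝ) [IsProbabilityMeasure μ]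
    [NullSingletonClass μ] : Continuous (cdf μ) := by
  have : NullSingletonClass (cdf μ).measure := by rwa [measure_cdf]
  exact (cdf μ).continuous_of_nullSingletonClass

theorem IsClosed.eq_Iic_csSup {α : Type*} [ConditionallyCompleteLinearOrder α]
    [TopologicalSpace α] [OrderTopology α] {s : Set α} (hc : IsClosed s) (hl : IsLowerSet s)
    (hne : s.Nonempty) (hbdd : BddAbove s) : s = Iic (sSup s) :=
  Subset.antisymm (fun _ hx => le_csSup hbdd hx) fun _ hx => hl hx (hc.csSup_mem hne hbdd)

theorem ProbabilityTheory.measure_cdf_preimage_Iic (μ : Measure ℝ) [IsProbabilityMeasure μ]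
    [NullSingletonClass μ] {t : ℝ} (ht0 : 0 ≤ t) (ht1 : t < 1) :
    μ (cdf μ ⁻¹' Iic t) = ENNReal.ofReal t := by
  set S := cdf μ ⁻¹' Iic t
  obtain ⟨y, hy⟩ : ∃ y, t < cdf μ y :=
    ((tendsto_cdf_atTop μ).eventually (lt_mem_nhds ht1)).exists
  rcases S.eq_empty_or_nonempty with hS | hS
  · obtain rfl : t = 0 := by
      refine le_antisymm (not_lt.1 fun ht => ?_) ht0
      obtain ⟨x, hx⟩ := ((tendsto_cdf_atBot μ).eventually (gt_mem_nhds ht)).exists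
      exact hS.subset (show x ∈ S from hx.le)
    rw [hS, measure_empty, ENNReal.ofReal_zero]
  have hbdd : BddAbove S := ⟨y, fun x hx => not_lt.1 fun hyx =>
    (hy.trans_le (monotone_cdf μ hyx.le)).not_ge hx⟩
  have hSeq : S = Iic (sSup S) := (isClosed_Iic.preimage (continuous_cdf μ)).eq_Iic_csSup
    (fun a b hba ha => (monotone_cdf μ hba).trans ha) hS hbdd
  obtain ⟨b, hb⟩ : t ∈ range (cdf μ) :=
    mem_range_of_exists_le_of_exists_ge (continuous_cdf μ) (hS.imp fun _ h => h) ⟨y, hy.le⟩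
  have hcdf : cdf μ (sSup S) = t := by
    refine le_antisymm (show sSup S ∈ S from hSeq.ge self_mem_Iic) ?_
    rw [← hb]
    exact monotone_cdf μ (le_csSup hbdd (show b ∈ S from hb.le))
  rw [hSeq, ← ofReal_cdf, hcdf]

theorem ProbabilityTheory.map_cdf (μ : Measure ℝ) [IsProbabilityMeasure μ]
    [NullSingletonClass μ] : μ.map (cdf μ) = volume.restrict (Ioc 0 1) := by
  refine Measure.ext_of_Iic _ _ fun t => ?_
  rw [Measure.map_apply (monotone_cdf μ).measurable measurableSet_Iic,
    Measure.restrict_apply measurableSet_Iic, inter_comm, Ioc_inter_Iic, Real.volume_Ioc,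
    sub_zero]
  rcases lt_or_ge t 0 with ht0 | ht0
  · have : cdf μ ⁻¹' Iic t = ∅ :=
      eq_empty_of_forall_notMem fun x hx => (ht0.trans_le (cdf_nonneg μ x)).not_ge hx
    rw [this, measure_empty, ENNReal.ofReal_of_nonpos ((min_le_right _ _).trans ht0.le)]
  rcases lt_or_ge t 1 with ht1 | ht1
  · rw [min_eq_right ht1.le, measure_cdf_preimage_Iic μ ht0 ht1]
  · have : cdf μ ⁻¹' Iic t = univ :=
      eq_univ_of_forall fun x => (cdf_le_one μ x).trans ht1
    rw [this, measure_univ, min_eq_left ht1, ENNReal.ofReal_one]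

theorem ProbabilityTheory.integral_comp_cdf {E : Type*} [NormedAddCommGroup E] [NormedSpace ℝ E]
    (μ : Measure ℝ) [IsProbabilityMeasure μ] [NullSingletonClass μ] {g : ℝ → E}
    (hg : AEStronglyMeasurable g (volume.restrict (Ioc 0 1))) :
    ∫ x, g (cdf μ x) ∂μ = ∫ u in Ioc 0 1, g u := by
  rw [← map_cdf μ] at hg ⊢
  exact (integral_map (monotone_cdf μ).measurable.aemeasurable hg).symm

theorem anderson_darling_limit_identity_general
    (Ω : Type*) [MeasurableSpace Ω] (P : Measure Ω)
    (B : ℝ → Ω → ℝ) (hB : IsStandardBrownianMotion P B)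
    (μ : Measure ℝ) [IsProbabilityMeasure μ] (hμ_ac : μ ≪ volume)
    (Ψ : ℝ → ℝ) (hΨ : ∀ x, Ψ x = (μ (Set.Iic x)).toReal) :
    P.map (fun ω => ∫ x, (B (Ψ x) ω) ^ 2 / Ψ x ∂μ)
      = P.map (fun ω => ∫ u in Set.Ioc (0 : ℝ) 1, (B u ω) ^ 2 / u) := by
  have : NullSingletonClass μ := ⟨fun x => hμ_ac (measure_singleton x)⟩
  obtain rfl : Ψ = cdf μ := funext fun x => by rw [hΨ, cdf_eq_real, measureReal_def]
  obtain ⟨-, hB_cont, -⟩ := hB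
  refine Measure.map_congr ?_
  filter_upwards [hB_cont] with ω hω
  exact integral_comp_cdf μ
    (((hω.measurable.pow_const 2).div measurable_id).aestronglyMeasurable)

/-- **Distributional identity for the Anderson–Darling type limit:**
if `μ` is an absolutely continuous Borel probability measure on `ℝ` with cumulative
distribution function `Ψ` satisfying `∫ Ψ(x)^{-1/2} μ(dx) < ∞`, then
`∫_ℝ (|B(Ψ(x))|²/Ψ(x)) μ(dx) =ᵈ ∫_0^1 (|B(u)|²/u) du`. -/
theorem anderson_darling_limit_identity
    (Ω : Type*) [MeasurableSpace Ω] (P : Measure Ω) [IsProbabilityMeasure P]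
    (B : ℝ → Ω → ℝ) (hB : IsStandardBrownianMotion P B)
    (μ : Measure ℝ) [IsProbabilityMeasure μ] (hμ_ac : μ ≪ volume)
    (Ψ : ℝ → ℝ) (hΨ : ∀ x, Ψ x = (μ (Set.Iic x)).toReal)
    (hΨ_int : Integrable (fun x => Ψ x ^ (-(1 : ℝ) / 2)) μ) :
    P.map (fun ω => ∫ x, (B (Ψ x) ω) ^ 2 / Ψ x ∂μ)
      = P.map (fun ω => ∫ u in Set.Ioc (0 : ℝ) 1, (B u ω) ^ 2 / u) :=
  anderson_darling_limit_identity_general Ω P B hB μ hμ_ac Ψ hΨ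
end
end

section
/- Let {X_i}_{i≥0} be a strictly stationary ergodic real-valued process with invariant law μ (a Borel probability measure on ℝ) whose cumulative distribution function is Ψ, so that n^{-1} Σ_{i=1}^n g(X_{i-1}) → ∫ g dμ almost surely for every μ-integrable g. Let F̂_n(x) = n^{-1} Σ_{i=1}^n 1_{(-∞,x]}(X_{i-1}) denote the empirical distribution function. Then ∫_ℝ (F̂_n(x))² μ(dx) → ∫_ℝ (Ψ(x))² μ(dx) almost surely as n → ∞. -/
/-!
For each fixed `x`, the ergodic theorem applied to the indicator of `(-∞, x]` gives
`F̂_n(x) → Ψ(x)` almost surely, hence simultaneously for all `x` in the countable set of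
rationals and discontinuity points of the monotone function `Ψ`. Since every `F̂_n` is
monotone, convergence on the dense set of rationals propagates to every continuity point of
`Ψ`, so `F̂_n → Ψ` everywhere on an event of full probability. On that event the integrands
`F̂_n²` are bounded by `1`, and dominated convergence finishes the proof.
-/

open MeasureTheory ProbabilityTheory Filter Set Finset
open scoped Topology

section MonotoneConvergence

variable {α β ι : Type*}
  [LinearOrder α] [TopologicalSpace α] [OrderTopology α] [DenselyOrdered α]
  [NoMinOrder α] [NoMaxOrder α] [LinearOrder β] [TopologicalSpace β] [OrderTopology β]

theorem tendsto_of_monotone_of_tendsto_on_dense {l : Filter ι} {f : ι → α → β} {g : α → β}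
    {D : Set α} (hD : Dense D) (hf : ∀ i, Monotone (f i))
    (hconv : ∀ d ∈ D, Tendsto (f · d) l (𝓝 (g d))) {x : α} (hx : ContinuousAt g x) :
    Tendsto (f · x) l (𝓝 (g x)) := by
  rw [tendsto_order]
  constructor
  · intro a ha
    obtain ⟨u, v, ⟨hux, hxv⟩, huv⟩ := mem_nhds_iff_exists_Ioo_subset.1 (hx (Ioi_mem_nhds ha))
    obtain ⟨d, hdD, hud, hdx⟩ := hD.exists_between hux
    filter_upwards [(hconv d hdD).eventually_const_lt (huv ⟨hud, hdx.trans hxv⟩)] with i hi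
    exact hi.trans_le (hf i hdx.le)
  · intro b hb
    obtain ⟨u, v, ⟨hux, hxv⟩, huv⟩ := mem_nhds_iff_exists_Ioo_subset.1 (hx (Iio_mem_nhds hb))
    obtain ⟨d, hdD, hxd, hdv⟩ := hD.exists_between hxv
    filter_upwards [(hconv d hdD).eventually_lt_const (huv ⟨hux.trans hxd, hdv⟩)] with i hi
    exact (hf i hxd.le).trans_lt hi

theorem tendsto_of_monotone_of_tendsto_on_dense_union_discontinuities {l : Filter ι}
    {f : ι → α → β} {g : α → β} {D : Set α} (hD : Dense D) (hf : ∀ i, Monotone (f i))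
    (hconv : ∀ d ∈ D ∪ {x | ¬ContinuousAt g x}, Tendsto (f · d) l (𝓝 (g d))) (x : α) :
    Tendsto (f · x) l (𝓝 (g x)) := by
  by_cases hx : ContinuousAt g x
  · exact tendsto_of_monotone_of_tendsto_on_dense hD hf (fun d hd => hconv d (.inl hd)) hx
  · exact hconv x (.inr hx)

end MonotoneConvergence

noncomputable def empiricalCDF (xs : ℕ → ℝ) (n : ℕ) (x : ℝ) : ℝ :=
  (n : ℝ)⁻¹ * ∑ i ∈ range n, if xs i ≤ x then 1 else 0

section EmpiricalCDF

variable (xs : ℕ → ℝ) (n : ℕ)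

theorem empiricalCDF_eq_card_div (x : ℝ) :
    empiricalCDF xs n x = #{i ∈ range n | xs i ≤ x} / n := by
  rw [empiricalCDF, sum_boole, inv_mul_eq_div]

theorem empiricalCDF_nonneg (x : ℝ) : 0 ≤ empiricalCDF xs n x := by
  rw [empiricalCDF_eq_card_div]
  positivity

theorem empiricalCDF_le_one (x : ℝ) : empiricalCDF xs n x ≤ 1 := by
  rw [empiricalCDF_eq_card_div]
  refine div_le_one_of_le₀ ?_ n.cast_nonneg
  exact_mod_cast (card_filter_le _ _).trans (card_range n).le

theorem monotone_empiricalCDF : Monotone (empiricalCDF xs n) := by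
  intro x y hxy
  simp only [empiricalCDF_eq_card_div]
  gcongr

end EmpiricalCDF

theorem tendsto_integral_empiricalCDF_sq {μ : Measure ℝ} [IsFiniteMeasure μ] {xs : ℕ → ℝ}
    {G : ℝ → ℝ} (h : ∀ x, Tendsto (empiricalCDF xs · x) atTop (𝓝 (G x))) :
    Tendsto (fun n => ∫ x, empiricalCDF xs n x ^ 2 ∂μ) atTop (𝓝 (∫ x, G x ^ 2 ∂μ)) := by
  refine tendsto_integral_of_dominated_convergence (fun _ => 1)
    (fun n => ((monotone_empiricalCDF xs n).measurable.pow_const 2).aestronglyMeasurable)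
    (integrable_const 1) (fun n => ae_of_all _ fun x => ?_) (ae_of_all _ fun x => (h x).pow 2)
  rw [norm_pow, Real.norm_of_nonneg (empiricalCDF_nonneg xs n x)]
  exact pow_le_one₀ (empiricalCDF_nonneg xs n x) (empiricalCDF_le_one xs n x)

theorem ae_tendsto_empiricalCDF_of_ergodic {Ω : Type*} [MeasurableSpace Ω] {P : Measure Ω}
    {X : ℕ → Ω → ℝ} {μ : Measure ℝ} [IsProbabilityMeasure μ]
    (herg : ∀ g : ℝ → ℝ, Integrable g μ →
      ∀ᵐ ω ∂P, Tendsto (fun n : ℕ => (n : ℝ)⁻¹ * ∑ i ∈ range n, g (X i ω))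
        atTop (𝓝 (∫ x, g x ∂μ))) (x : ℝ) :
    ∀ᵐ ω ∂P, Tendsto (empiricalCDF (X · ω) · x) atTop (𝓝 (cdf μ x)) := by
  have h := herg _ ((integrable_const (1 : ℝ)).indicator (measurableSet_Iic (a := x)))
  rw [integral_indicator_const _ measurableSet_Iic, smul_eq_mul, mul_one, ← cdf_eq_real] at h
  filter_upwards [h] with ω hω
  convert hω using 3
  simp [empiricalCDF, indicator_apply]

theorem empirical_df_squared_integral_convergence_general
    (Ω : Type*) [MeasurableSpace Ω] (P : Measure Ω)
    (X : ℕ → Ω → ℝ)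
    -- the invariant law μ and ergodicity
    (μ : Measure ℝ) [IsProbabilityMeasure μ]
    (herg : ∀ g : ℝ → ℝ, Integrable g μ →
      ∀ᵐ ω ∂P, Tendsto (fun n : ℕ => (n : ℝ)⁻¹ * ∑ i ∈ Finset.range n, g (X i ω))
        atTop (𝓝 (∫ x, g x ∂μ)))
    -- the distribution function Ψ of μ
    (Ψ : ℝ → ℝ) (hΨ : ∀ x, Ψ x = (μ (Set.Iic x)).toReal) :
    -- conclusion
    ∀ᵐ ω ∂P, Tendsto (fun n : ℕ =>
        ∫ x, ((n : ℝ)⁻¹ * ∑ i ∈ Finset.range n,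
            if X i ω ≤ x then (1 : ℝ) else 0) ^ 2 ∂μ)
      atTop (𝓝 (∫ x, Ψ x ^ 2 ∂μ)) := by
  obtain rfl : Ψ = cdf μ := funext fun x => by rw [hΨ, cdf_eq_real, measureReal_def]
  have hD : (range ((↑) : ℚ → ℝ) ∪ {x | ¬ContinuousAt (cdf μ) x}).Countable :=
    (countable_range _).union (monotone_cdf μ).countable_not_continuousAt
  filter_upwards [(ae_ball_iff hD).2 fun d _ => ae_tendsto_empiricalCDF_of_ergodic herg d]
    with ω hω
  exact tendsto_integral_empiricalCDF_sq <|
    tendsto_of_monotone_of_tendsto_on_dense_union_discontinuities Rat.denseRange_cast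
      (monotone_empiricalCDF _) hω

/-- **Ergodic convergence of the squared empirical distribution functional:**
for a strictly stationary ergodic process with invariant law `μ` and cdf `Ψ`,
`∫ (F̂_n(x))² μ(dx) → ∫ (Ψ(x))² μ(dx)` almost surely, where
`F̂_n(x) = n⁻¹ Σ_{i=1}^n 1_{(-∞,x]}(X_{i-1})`. -/
theorem empirical_df_squared_integral_convergence
    (Ω : Type*) [MeasurableSpace Ω] (P : Measure Ω) [IsProbabilityMeasure P]
    (X : ℕ → Ω → ℝ) (hX_meas : ∀ i, Measurable (X i))
    -- strict stationarity
    (hstat : ∀ (k nn : ℕ) (idx : Fin nn → ℕ),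
      P.map (fun ω => fun j => X (idx j + k) ω) = P.map (fun ω => fun j => X (idx j) ω))
    -- the invariant law μ and ergodicity
    (μ : Measure ℝ) [IsProbabilityMeasure μ]
    (hμ_law : ∀ i, P.map (X i) = μ)
    (herg : ∀ g : ℝ → ℝ, Integrable g μ →
      ∀ᵐ ω ∂P, Tendsto (fun n : ℕ => (n : ℝ)⁻¹ * ∑ i ∈ Finset.range n, g (X i ω))
        atTop (𝓝 (∫ x, g x ∂μ)))
    -- the distribution function Ψ of μ
    (Ψ : ℝ → ℝ) (hΨ : ∀ x, Ψ x = (μ (Set.Iic x)).toReal) :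
    -- conclusion
    ∀ᵐ ω ∂P, Tendsto (fun n : ℕ =>
        ∫ x, ((n : ℝ)⁻¹ * ∑ i ∈ Finset.range n,
            if X i ω ≤ x then (1 : ℝ) else 0) ^ 2 ∂μ)
      atTop (𝓝 (∫ x, Ψ x ^ 2 ∂μ)) :=
  empirical_df_squared_integral_convergence_general Ω P X μ herg Ψ hΨ
end
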